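/- Let z = x + iy be a complex number with y ≠ 0. Define S(w) = arcsin(β(w)) + i·sign(Im w)·arcosh(α(w)) and Y(w) = α(w)·√(1−β(w)²) − i·sign(Im w)·β(w)·√(α(w)²−1), where α(w) = (|w−1|+|w+1|)/2 and β(w) = (|w+1|−|w−1|)/2. Then the function w ↦ w·S(w) + Y(w) is complex differentiable at z with derivative equal to S(z); that is, z·S(z) + Y(z) is an antiderivative of the principal branch of the inverse sine. -/

import Mathlib

/-!
Off the real axis `S` is a continuous local right inverse of `sin`: the identities
`α β = Re w` and `(1 - β²)(α² - 1) = (Im w)²` give `sin (S w) = w`, and likewise `cos (S w) = Y w`,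
which cannot vanish because `sin (S w) = w ≠ ±1`. So `S' = 1 / cos S`, and the rule
`(w g(w) - G(g(w)))' = g` for an inverse `g` of `f` and a primitive `G` of `f`, applied with
`f = sin`, `G = -cos`, shows that `w S + Y` is a primitive of `S`.
-/

open Complex

/-- Real inverse hyperbolic cosine, `arcosh t = ln (t + √(t²-1))`. -/
noncomputable def arcosh (t : ℝ) : ℝ := Real.log (t + Real.sqrt (t ^ 2 - 1))

/-- `α(w) = (|w-1| + |w+1|)/2`. -/
noncomputable def alpha (w : ℂ) : ℝ := (‖w - 1‖ + ‖w + 1‖) / 2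

/-- `β(w) = (|w+1| - |w-1|)/2`. -/
noncomputable def beta (w : ℂ) : ℝ := (‖w + 1‖ - ‖w - 1‖) / 2

/-- Principal branch `S(w)` of the inverse sine. -/
noncomputable def S (w : ℂ) : ℂ :=
  (Real.arcsin (beta w) : ℝ) + Complex.I * (Real.sign w.im : ℝ) * (arcosh (alpha w) : ℝ)

/-- Principal branch `Y(w)` of `√(1-w²)`. -/
noncomputable def Y (w : ℂ) : ℂ :=
  (alpha w * Real.sqrt (1 - (beta w) ^ 2) : ℝ) -
    Complex.I * (Real.sign w.im : ℝ) * (beta w * Real.sqrt ((alpha w) ^ 2 - 1) : ℝ)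

open Filter Topology

theorem HasDerivAt.mul_sub_comp_of_local_left_inverse {𝕜 : Type*} [NontriviallyNormedField 𝕜]
    {f g G : 𝕜 → 𝕜} {f' a : 𝕜} (hg : ContinuousAt g a) (hf : HasDerivAt f f' (g a))
    (hf' : f' ≠ 0) (hfg : ∀ᶠ y in 𝓝 a, f (g y) = y) (hG : HasDerivAt G (f (g a)) (g a)) :
    HasDerivAt (fun y => y * g y - G (g y)) (g a) a := by
  have hg' : HasDerivAt g f'⁻¹ a := hf.of_local_left_inverse hg hf' hfg
  have h := ((hasDerivAt_id a).mul hg').sub (hG.comp a hg')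
  rw [hfg.self_of_nhds] at h
  exact h.congr_deriv (by simp)

namespace Real

theorem cosh_sign_mul {x : ℝ} (hx : x ≠ 0) (t : ℝ) : cosh (sign x * t) = cosh t := by
  rcases sign_apply_eq_of_ne_zero x hx with h | h <;> simp [h]

theorem sinh_sign_mul (x t : ℝ) : sinh (sign x * t) = sign x * sinh t := by
  rcases sign_apply_eq x with h | h | h <;> simp [h]

theorem sign_mul_abs (x : ℝ) : sign x * |x| = x := by
  rcases lt_trichotomy x 0 with h | rfl | h
  · simp [sign_of_neg h, abs_of_neg h]
  · simp
  · simp [sign_of_pos h, abs_of_pos h]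

theorem eventually_sign_eq {x : ℝ} (hx : x ≠ 0) : ∀ᶠ y in 𝓝 x, sign y = sign x := by
  rcases hx.lt_or_gt with h | h
  · filter_upwards [eventually_lt_nhds h] with y hy
    rw [sign_of_neg hy, sign_of_neg h]
  · filter_upwards [eventually_gt_nhds h] with y hy
    rw [sign_of_pos hy, sign_of_pos h]

end Real

theorem arcosh_eq_real_arcosh : arcosh = Real.arcosh := rfl

namespace Complex

theorem norm_add_one_sq (w : ℂ) : ‖w + 1‖ ^ 2 = (w.re + 1) ^ 2 + w.im ^ 2 := by
  rw [Complex.sq_norm, normSq_apply]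
  simp only [add_re, one_re, add_im, one_im, add_zero]
  ring

theorem norm_sub_one_sq (w : ℂ) : ‖w - 1‖ ^ 2 = (w.re - 1) ^ 2 + w.im ^ 2 := by
  rw [Complex.sq_norm, normSq_apply]
  simp only [sub_re, one_re, sub_im, one_im, sub_zero]
  ring

end Complex

theorem alpha_mul_beta (w : ℂ) : alpha w * beta w = w.re := by
  unfold alpha beta
  linear_combination (norm_add_one_sq w - norm_sub_one_sq w) / 4

theorem one_sub_beta_sq_mul_alpha_sq_sub_one (w : ℂ) :
    (1 - beta w ^ 2) * (alpha w ^ 2 - 1) = w.im ^ 2 := by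
  have hsum : alpha w ^ 2 + beta w ^ 2 = w.re ^ 2 + w.im ^ 2 + 1 := by
    unfold alpha beta
    linear_combination (norm_add_one_sq w + norm_sub_one_sq w) / 2
  linear_combination hsum - congrArg (· ^ 2) (alpha_mul_beta w)

theorem one_le_alpha (w : ℂ) : 1 ≤ alpha w := by
  have h := norm_sub_le (w + 1) (w - 1)
  rw [add_sub_sub_cancel, one_add_one_eq_two, Complex.norm_two] at h
  unfold alpha; linarith

theorem abs_beta_le_one (w : ℂ) : |beta w| ≤ 1 := by
  have h := abs_norm_sub_norm_le (w + 1) (w - 1)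
  rw [add_sub_sub_cancel, one_add_one_eq_two, Complex.norm_two] at h
  unfold beta; rw [abs_div, abs_two]; linarith

theorem S_eq (w : ℂ) :
    S w = Real.arcsin (beta w) + (Real.sign w.im * arcosh (alpha w) : ℝ) * I := by
  unfold S; push_cast; ring

theorem sin_S {w : ℂ} (hw : w.im ≠ 0) : sin (S w) = w := by
  obtain ⟨hb₁, hb₂⟩ := abs_le.mp (abs_beta_le_one w)
  have hroots : √(1 - beta w ^ 2) * √(alpha w ^ 2 - 1) = |w.im| := by
    rw [← Real.sqrt_mul (by nlinarith), one_sub_beta_sq_mul_alpha_sq_sub_one, Real.sqrt_sq_eq_abs]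
  rw [S_eq, sin_add_mul_I, ← ofReal_sin, ← ofReal_cos,
    ← ofReal_cosh, ← ofReal_sinh, Real.sin_arcsin hb₁ hb₂, Real.cos_arcsin,
    Real.cosh_sign_mul hw, Real.sinh_sign_mul, arcosh_eq_real_arcosh,
    Real.cosh_arcosh (one_le_alpha w), Real.sinh_arcosh (one_le_alpha w)]
  apply ext
  · simp [mul_comm, alpha_mul_beta]
  · simp only [ofReal_mul, add_im, mul_im, ofReal_re, ofReal_im, mul_zero, zero_mul, add_zero,
      mul_re, sub_zero, I_im, mul_one, I_re, zero_add]
    linear_combination Real.sign w.im * hroots + Real.sign_mul_abs w.im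

theorem cos_S {w : ℂ} (hw : w.im ≠ 0) : cos (S w) = Y w := by
  obtain ⟨hb₁, hb₂⟩ := abs_le.mp (abs_beta_le_one w)
  rw [S_eq, cos_add_mul_I, ← ofReal_sin, ← ofReal_cos, ← ofReal_cosh, ← ofReal_sinh,
    Real.sin_arcsin hb₁ hb₂, Real.cos_arcsin, Real.cosh_sign_mul hw, Real.sinh_sign_mul,
    arcosh_eq_real_arcosh, Real.cosh_arcosh (one_le_alpha w), Real.sinh_arcosh (one_le_alpha w), Y]
  push_cast
  ring

theorem cos_S_ne_zero {w : ℂ} (hw : w.im ≠ 0) : cos (S w) ≠ 0 := by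
  intro hcos
  have hsq : w ^ 2 = 1 := by simpa [hcos, sin_S hw] using sin_sq_add_cos_sq (S w)
  rcases sq_eq_one_iff.mp hsq with rfl | rfl <;> simp at hw

theorem continuousAt_arcosh {t : ℝ} (ht : 0 < t) : ContinuousAt arcosh t :=
  ContinuousAt.log (by fun_prop) (by positivity)

theorem continuousAt_S {z : ℂ} (hz : z.im ≠ 0) : ContinuousAt S z := by
  have hα : Continuous alpha := by unfold alpha; fun_prop
  have hβ : Continuous beta := by unfold beta; fun_prop
  have harcosh := (continuousAt_arcosh (one_pos.trans_le (one_le_alpha z))).comp hα.continuousAt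
  have hsign : ∀ᶠ w in 𝓝 z, Real.sign w.im = Real.sign z.im :=
    continuous_im.continuousAt.eventually (Real.eventually_sign_eq hz)
  refine ContinuousAt.congr (f := fun w => (Real.arcsin (beta w) : ℂ) +
    I * (Real.sign z.im : ℝ) * (arcosh (alpha w) : ℝ)) (by fun_prop) ?_
  filter_upwards [hsign] with w hw
  rw [S, hw]

theorem stmt11 (z : ℂ) (h : z.im ≠ 0) :
    HasDerivAt (fun w : ℂ => w * S w + Y w) (S z) z := by
  have him : ∀ᶠ w in 𝓝 z, w.im ≠ 0 := continuous_im.continuousAt.eventually_ne h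
  have hS : HasDerivAt (fun w => w * S w - (-cos) (S w)) (S z) z :=
    HasDerivAt.mul_sub_comp_of_local_left_inverse (continuousAt_S h)
      (hasDerivAt_sin (S z)) (cos_S_ne_zero h) (him.mono fun _ => sin_S)
      (by simpa using (hasDerivAt_cos (S z)).neg)
  refine hS.congr_of_eventuallyEq ?_
  filter_upwards [him] with w hw
  rw [Pi.neg_apply, sub_neg_eq_add, cos_S hw]
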